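/- Let f : [0,1] → [0,∞) be a continuous excursion function, let n ≥ 6, and suppose there is an interval [s,t] ⊆ [0,1] with s < t such that sup_{u∈[0,1]} |f(s + (t−s)u) − f(s) − √(t−s)·F_n(u)| < √(t−s)·2^{1−n}, where F_n is the zig-zag function. Set G(u) = s + (t−s)u, z = 1/(4n), and y_p = (2p+1)/(2n) for 0 ≤ p ≤ n−2. Then, with respect to the pseudometric d_f(x,y) = f(x) + f(y) − 2·min{f(w) : min{x,y} ≤ w ≤ max{x,y}}: (i) (1/2 − 2^{3−n})√(t−s) ≤ d_f(G(z), G(y_p)) ≤ (1/2 + 2^{3−n})√(t−s) for every p; and (ii) (1 − 2^{3−n})√(t−s) ≤ d_f(G(y_q), G(y_p)) ≤ (1 + 2^{3−n})√(t−s) for all q ≠ p. Consequently, the points x_0 = G(z) and x_p = G(y_{p−1}), 1 ≤ p ≤ n−1, form an (A_n, η_n)-approximate (n−1)-star in ([0,1], d_f) with ρ_n = (1 − 2^{4−n})·(1/2)·√(t−s), A_n = (2 + 2^{4−n})/(1 − 2^{4−n}) > 2, and η_n = (1 + 2^{4−n})/(1 − 2^{4−n}) − 1 ∈ (0, 2/3].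 -/

import Mathlib

open Set

/-- The continuum-tree distance associated to an excursion function `f`. -/
noncomputable def treeDist (f : ℝ → ℝ) (x y : ℝ) : ℝ :=
  f x + f y - 2 * sInf (f '' Set.Icc (min x y) (max x y))

/-- The zig-zag function `F_n : [0,1] → [0,∞)`: `F_n(x) = 2nx` on `[0,1/(2n))`;
`F_n(x) = −nx + (2k+3)/2` on `[(2k+1)/(2n), (k+1)/n)` and `F_n(x) = nx − k − 1/2` on
`[(k+1)/n, (2k+3)/(2n))`, for `0 ≤ k ≤ n−2`; and `F_n(x) = −2nx + 2n` on
`[(2n−1)/(2n), 1]`.  (On the middle part the relevant `k` is recovered from `⌊2nx⌋`.) -/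
noncomputable def zigzag (n : ℕ) (x : ℝ) : ℝ :=
  if x < 1 / (2 * n) then 2 * n * x
  else if (2 * n - 1) / (2 * n) ≤ x then -2 * n * x + 2 * n
  else if ⌊2 * (n : ℝ) * x⌋ % 2 = 1 then
    -(n : ℝ) * x + (2 * (((⌊2 * (n : ℝ) * x⌋ - 1) / 2 : ℤ) : ℝ) + 3) / 2
  else (n : ℝ) * x - ((⌊2 * (n : ℝ) * x⌋ / 2 - 1 : ℤ) : ℝ) - 1 / 2

/-- The points `x 0, …, x m` form an `(A,η)`-approximate `m`-star with scale `ρ` for the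
distance function `d`. -/
def IsApproxStarPts {α : Type*} (d : α → α → ℝ) (A η ρ : ℝ) (m : ℕ)
    (x : Fin (m + 1) → α) : Prop :=
  0 < ρ ∧
  (∀ i j : Fin (m + 1), i ≠ 0 → j ≠ 0 → i ≠ j →
    (A - η) * ρ ≤ d (x i) (x j) ∧ d (x i) (x j) ≤ A * ρ) ∧
  (∀ i : Fin (m + 1), i ≠ 0 → ρ ≤ d (x 0) (x i) ∧ d (x 0) (x i) ≤ (1 + η) * ρ)

/-!
On `[s, t]`, `f` lies within `ε = √(t-s)·2^{1-n}` of `g = f s + √(t-s)·F_n ∘ G⁻¹`, and a uniform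
perturbation of size `ε` moves `d_f(a, b) = f a + f b - 2 inf_{[a,b]} f` by at most `4ε`. For `g`
the infimum over `[G u₁, G u₂]` is attained at a point where `F_n = 1/2` (at `z` itself, or at the
valley `(q+1)/n` between two peaks), while `F_n(z) = 1/2` and `F_n(y_p) = 1`. Hence `d_g` is
`√(t-s)/2` from `z` to a peak and `√(t-s)` between two peaks, up to `4ε = √(t-s)·2^{3-n}`; the star
parameters are a rewriting of these two estimates.
-/

section TreeDist

variable {f g : ℝ → ℝ} {a b : ℝ}

lemma treeDist_comm (f : ℝ → ℝ) (x y : ℝ) : treeDist f x y = treeDist f y x := by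
  unfold treeDist; rw [min_comm, max_comm]; ring

lemma treeDist_of_le (hab : a ≤ b) :
    treeDist f a b = f a + f b - 2 * sInf (f '' Icc a b) := by
  rw [treeDist, min_eq_left hab, max_eq_right hab]

lemma treeDist_eq_of_isMinOn {c : ℝ} (hab : a ≤ b) (hc : c ∈ Icc a b)
    (hmin : IsMinOn f (Icc a b) c) : treeDist f a b = f a + f b - 2 * f c := by
  have hinf : sInf (f '' Icc a b) = f c := (hmin.isGLB hc).csInf_eq ⟨f c, c, hc, rfl⟩
  rw [treeDist_of_le hab, hinf]

lemma abs_treeDist_sub_le {ε : ℝ} (hab : a ≤ b) (hg : BddBelow (g '' Icc a b))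
    (hfg : ∀ w ∈ Icc a b, |f w - g w| ≤ ε) :
    |treeDist f a b - treeDist g a b| ≤ 4 * ε := by
  have hne : (Icc a b).Nonempty := nonempty_Icc.mpr hab
  obtain ⟨m, hm⟩ := hg
  have hf : BddBelow (f '' Icc a b) := ⟨m - ε, by
    rintro _ ⟨w, hw, rfl⟩
    linarith [hm ⟨w, hw, rfl⟩, (abs_le.mp (hfg w hw)).1]⟩
  have hf_le : sInf (f '' Icc a b) ≤ sInf (g '' Icc a b) + ε := by
    rw [← sub_le_iff_le_add]
    refine le_csInf (hne.image g) ?_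
    rintro _ ⟨w, hw, rfl⟩
    linarith [csInf_le hf ⟨w, hw, rfl⟩, (abs_le.mp (hfg w hw)).2]
  have hg_le : sInf (g '' Icc a b) ≤ sInf (f '' Icc a b) + ε := by
    rw [← sub_le_iff_le_add]
    refine le_csInf (hne.image f) ?_
    rintro _ ⟨w, hw, rfl⟩
    linarith [csInf_le ⟨m, hm⟩ ⟨w, hw, rfl⟩, (abs_le.mp (hfg w hw)).1]
  have ha := abs_le.mp (hfg a ⟨le_rfl, hab⟩)
  have hb := abs_le.mp (hfg b ⟨hab, le_rfl⟩)
  rw [treeDist_of_le hab, treeDist_of_le hab, abs_le]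
  constructor <;> linarith [ha.1, ha.2, hb.1, hb.2]

lemma treeDist_affine {s t : ℝ} (hst : s < t) (x y : ℝ) :
    treeDist f (s + (t - s) * x) (s + (t - s) * y) =
      treeDist (fun u => f (s + (t - s) * u)) x y := by
  have hG : Monotone fun u => s + (t - s) * u := fun u v huv =>
    add_le_add_right (mul_le_mul_of_nonneg_left huv (sub_pos.mpr hst).le) s
  have himage : (fun u => s + (t - s) * u) '' Icc (min x y) (max x y) =
      Icc (s + (t - s) * min x y) (s + (t - s) * max x y) := by
    simpa only [add_comm s] using image_affine_Icc' (sub_pos.mpr hst) s (min x y) (max x y)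
  rw [treeDist, treeDist, ← hG.map_min, ← hG.map_max, ← himage, image_image]

end TreeDist

lemma abs_treeDist_affine_sub_le {f F : ℝ → ℝ} {s t c σ ε u₀ u₁ u₂ : ℝ} (hst : s < t)
    (hσ : 0 ≤ σ) (hu₀ : u₀ ∈ Icc u₁ u₂) (hmin : IsMinOn F (Icc u₁ u₂) u₀)
    (happrox : ∀ u ∈ Icc u₁ u₂, |f (s + (t - s) * u) - c - σ * F u| ≤ ε) :
    |treeDist f (s + (t - s) * u₁) (s + (t - s) * u₂) - σ * (F u₁ + F u₂ - 2 * F u₀)| ≤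
      4 * ε := by
  have hu₁₂ : u₁ ≤ u₂ := hu₀.1.trans hu₀.2
  have hmin' : IsMinOn (fun u => c + σ * F u) (Icc u₁ u₂) u₀ := isMinOn_iff.mpr fun u hu =>
    add_le_add_right (mul_le_mul_of_nonneg_left (isMinOn_iff.mp hmin u hu) hσ) c
  have key := abs_treeDist_sub_le hu₁₂ hmin'.bddBelow fun u hu => by
    simpa only [sub_sub] using happrox u hu
  rw [treeDist_eq_of_isMinOn hu₁₂ hu₀ hmin'] at key
  rw [treeDist_affine hst]
  convert key using 3
  ring

section Zigzag

variable {n : ℕ}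

lemma zigzag_one_div_four_mul (hn : 0 < n) : zigzag n (1 / (4 * n)) = 1 / 2 := by
  have hn' : (0 : ℝ) < n := by exact_mod_cast hn
  rw [zigzag, if_pos (by gcongr; norm_num)]
  field_simp
  ring

lemma zigzag_odd_div {p : ℕ} (hp : p + 2 ≤ n) : zigzag n ((2 * p + 1) / (2 * n)) = 1 := by
  have hp' : (p : ℝ) + 2 ≤ n := by exact_mod_cast hp
  have hn : (0 : ℝ) < n := by linarith [(p.cast_nonneg : (0 : ℝ) ≤ p)]
  have hfloor : 2 * (n : ℝ) * ((2 * p + 1) / (2 * n)) = ((2 * p + 1 : ℤ) : ℝ) := by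
    push_cast; field_simp
  have hhalf : (2 * (p : ℤ) + 1 - 1) / 2 = p := by omega
  rw [zigzag, if_neg (by rw [not_lt, div_le_div_iff_of_pos_right (by positivity)]; linarith),
    if_neg (by rw [not_le, div_lt_div_iff_of_pos_right (by positivity)]; linarith),
    hfloor, Int.floor_intCast, if_pos (by omega), hhalf, Int.cast_natCast]
  field_simp
  ring

lemma zigzag_succ_div {k : ℕ} (hk : k + 2 ≤ n) : zigzag n ((k + 1) / n) = 1 / 2 := by
  have hk' : (k : ℝ) + 2 ≤ n := by exact_mod_cast hk
  have hn : (0 : ℝ) < n := by linarith [(k.cast_nonneg : (0 : ℝ) ≤ k)]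
  have hfloor : 2 * (n : ℝ) * ((k + 1) / n) = ((2 * k + 2 : ℤ) : ℝ) := by
    push_cast; field_simp
  have hhalf : (2 * (k : ℤ) + 2) / 2 - 1 = k := by omega
  rw [zigzag, if_neg (by
      rw [not_lt, div_le_div_iff₀ (by positivity) hn]; nlinarith [(k.cast_nonneg : (0 : ℝ) ≤ k)]),
    if_neg (by rw [not_le, div_lt_div_iff₀ hn (by positivity)]; nlinarith),
    hfloor, Int.floor_intCast, if_neg (by omega), hhalf, Int.cast_natCast]
  field_simp
  ring

lemma one_half_le_zigzag (hn : 0 < n) {x : ℝ} (hx₁ : 1 / (4 * n) ≤ x)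
    (hx₂ : x ≤ 1 - 1 / (4 * n)) : 1 / 2 ≤ zigzag n x := by
  have hn' : (0 : ℝ) < n := by exact_mod_cast hn
  have hx₁' : 1 / 2 ≤ 2 * n * x := by
    rw [div_le_iff₀ (by positivity)] at hx₁; linarith
  have hx₂' : 2 * n * x ≤ 2 * n - 1 / 2 := by
    rw [le_sub_iff_add_le, ← le_sub_iff_add_le', div_le_iff₀ (by positivity)] at hx₂; nlinarith
  set m := ⌊2 * (n : ℝ) * x⌋
  have hm₁ : (m : ℝ) ≤ 2 * n * x := Int.floor_le _
  have hm₂ : 2 * (n : ℝ) * x < m + 1 := Int.lt_floor_add_one _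
  unfold zigzag
  split_ifs with h₁ h₂ hodd
  · linarith
  · linarith
  · have hm : 2 * ((m - 1) / 2) = m - 1 := by omega
    have hm' : (2 * ((m - 1) / 2 : ℤ) : ℝ) = m - 1 := by exact_mod_cast hm
    linarith
  · have hm : 2 * (m / 2 - 1) = m - 2 := by omega
    have hm' : (2 * (m / 2 - 1 : ℤ) : ℝ) = m - 2 := by exact_mod_cast hm
    linarith

lemma isMinOn_zigzag (hn : 0 < n) {u₀ u₁ u₂ : ℝ} (hu₁ : 1 / (4 * n) ≤ u₁)
    (hu₂ : u₂ ≤ 1 - 1 / (4 * n)) (hu₀ : zigzag n u₀ = 1 / 2) :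
    IsMinOn (zigzag n) (Icc u₁ u₂) u₀ :=
  isMinOn_iff.mpr fun _ hu => hu₀ ▸ one_half_le_zigzag hn (hu₁.trans hu.1) (hu.2.trans hu₂)

end Zigzag

section OddPoints

variable {n p : ℕ}

lemma one_div_four_mul_le_odd_div (hn : 0 < n) :
    1 / (4 * (n : ℝ)) ≤ (2 * p + 1) / (2 * n) := by
  have hn' : (0 : ℝ) < n := by exact_mod_cast hn
  rw [div_le_div_iff₀ (by positivity) (by positivity)]
  nlinarith [(p.cast_nonneg : (0 : ℝ) ≤ p)]

lemma odd_div_le_one_sub (hp : p + 2 ≤ n) :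
    (2 * (p : ℝ) + 1) / (2 * n) ≤ 1 - 1 / (4 * n) := by
  have hp' : (p : ℝ) + 2 ≤ n := by exact_mod_cast hp
  have hn' : (0 : ℝ) < n := by linarith [(p.cast_nonneg : (0 : ℝ) ≤ p)]
  rw [one_sub_div (by positivity), div_le_div_iff₀ (by positivity) (by positivity)]
  nlinarith

lemma odd_div_le_one (hp : p + 2 ≤ n) : (2 * (p : ℝ) + 1) / (2 * n) ≤ 1 :=
  (odd_div_le_one_sub hp).trans (sub_le_self _ (by positivity))

end OddPoints

def IsZigzagApprox (f : ℝ → ℝ) (n : ℕ) (s t : ℝ) : Prop :=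
  ∀ u ∈ Icc (0 : ℝ) 1, |f (s + (t - s) * u) - f s - Real.sqrt (t - s) * zigzag n u| <
    Real.sqrt (t - s) * (2 : ℝ) ^ (1 - (n : ℤ))

namespace IsZigzagApprox

variable {f : ℝ → ℝ} {n : ℕ} {s t : ℝ}

lemma abs_treeDist_sub_le (h : IsZigzagApprox f n s t) (hst : s < t)
    {u₀ u₁ u₂ : ℝ} (h₀ : 0 ≤ u₁) (hu₀ : u₀ ∈ Icc u₁ u₂) (h₁ : u₂ ≤ 1)
    (hmin : IsMinOn (zigzag n) (Icc u₁ u₂) u₀) :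
    |treeDist f (s + (t - s) * u₁) (s + (t - s) * u₂) -
        Real.sqrt (t - s) * (zigzag n u₁ + zigzag n u₂ - 2 * zigzag n u₀)| ≤
      (2 : ℝ) ^ (3 - (n : ℤ)) * Real.sqrt (t - s) := by
  have h4 : (2 : ℝ) ^ (3 - (n : ℤ)) = 4 * 2 ^ (1 - (n : ℤ)) := by
    rw [show 3 - (n : ℤ) = 2 + (1 - n) by ring, zpow_add₀ two_ne_zero]; norm_num
  rw [h4, mul_assoc, mul_comm _ (Real.sqrt _)]
  exact abs_treeDist_affine_sub_le hst (Real.sqrt_nonneg _) hu₀ hmin fun u hu =>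
    (h u ⟨h₀.trans hu.1, hu.2.trans h₁⟩).le

lemma treeDist_center_odd_bounds (h : IsZigzagApprox f n s t) (hst : s < t)
    {p : ℕ} (hp : p + 2 ≤ n) :
    (1 / 2 - (2 : ℝ) ^ (3 - (n : ℤ))) * Real.sqrt (t - s) ≤
        treeDist f (s + (t - s) * (1 / (4 * n))) (s + (t - s) * ((2 * p + 1) / (2 * n))) ∧
      treeDist f (s + (t - s) * (1 / (4 * n))) (s + (t - s) * ((2 * p + 1) / (2 * n))) ≤
        (1 / 2 + (2 : ℝ) ^ (3 - (n : ℤ))) * Real.sqrt (t - s) := by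
  have hn : 0 < n := by omega
  have key := h.abs_treeDist_sub_le hst (by positivity) ⟨le_rfl, one_div_four_mul_le_odd_div hn⟩
    (odd_div_le_one hp)
    (isMinOn_zigzag hn le_rfl (odd_div_le_one_sub hp) (zigzag_one_div_four_mul hn))
  rw [zigzag_one_div_four_mul hn, zigzag_odd_div hp, abs_le] at key
  constructor <;> linarith

lemma treeDist_odd_odd_bounds (h : IsZigzagApprox f n s t) (hst : s < t)
    {p q : ℕ} (hp : p + 2 ≤ n) (hq : q + 2 ≤ n) (hpq : p ≠ q) :
    (1 - (2 : ℝ) ^ (3 - (n : ℤ))) * Real.sqrt (t - s) ≤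
        treeDist f (s + (t - s) * ((2 * q + 1) / (2 * n)))
          (s + (t - s) * ((2 * p + 1) / (2 * n))) ∧
      treeDist f (s + (t - s) * ((2 * q + 1) / (2 * n)))
          (s + (t - s) * ((2 * p + 1) / (2 * n))) ≤
        (1 + (2 : ℝ) ^ (3 - (n : ℤ))) * Real.sqrt (t - s) := by
  wlog hqp : q < p generalizing p q
  · rw [treeDist_comm]
    exact this hq hp hpq.symm (by omega)
  have hn : 0 < n := by omega
  have hn' : (0 : ℝ) < n := by exact_mod_cast hn
  have hqp' : (q : ℝ) + 1 ≤ p := by exact_mod_cast hqp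
  have hvalley : ((q : ℝ) + 1) / n ∈ Icc ((2 * q + 1) / (2 * (n : ℝ))) ((2 * p + 1) / (2 * n)) := by
    constructor <;> rw [div_le_div_iff₀ (by positivity) (by positivity)] <;> nlinarith
  have key := h.abs_treeDist_sub_le hst (by positivity) hvalley (odd_div_le_one hp)
    (isMinOn_zigzag hn (one_div_four_mul_le_odd_div hn) (odd_div_le_one_sub hp)
      (zigzag_succ_div (k := q) (by omega)))
  rw [zigzag_odd_div hp, zigzag_odd_div hq, zigzag_succ_div (by omega), abs_le] at key
  constructor <;> linarith

end IsZigzagApprox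

lemma isApproxStarPts_of_dist_bounds {α : Type*} {d : α → α → ℝ} {m : ℕ}
    {x : Fin (m + 1) → α} {δ σ : ℝ} (hδ : δ < 1 / 2) (hσ : 0 < σ)
    (hcenter : ∀ i, i ≠ 0 → (1 / 2 - δ) * σ ≤ d (x 0) (x i) ∧ d (x 0) (x i) ≤ (1 / 2 + δ) * σ)
    (hleaf : ∀ i j, i ≠ 0 → j ≠ 0 → i ≠ j →
      (1 - δ) * σ ≤ d (x i) (x j) ∧ d (x i) (x j) ≤ (1 + δ) * σ) :
    IsApproxStarPts d ((2 + 2 * δ) / (1 - 2 * δ)) ((1 + 2 * δ) / (1 - 2 * δ) - 1)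
      ((1 - 2 * δ) * (1 / 2) * σ) m x := by
  have hδ' : 1 - 2 * δ ≠ 0 := by linarith
  have hρ : (1 - 2 * δ) * (1 / 2) * σ = (1 / 2 - δ) * σ := by ring
  have hA : (2 + 2 * δ) / (1 - 2 * δ) * ((1 - 2 * δ) * (1 / 2) * σ) = (1 + δ) * σ := by
    field_simp
  have hAη : ((2 + 2 * δ) / (1 - 2 * δ) - ((1 + 2 * δ) / (1 - 2 * δ) - 1)) *
      ((1 - 2 * δ) * (1 / 2) * σ) = (1 - δ) * σ := by
    field_simp; ring
  have hη : (1 + ((1 + 2 * δ) / (1 - 2 * δ) - 1)) * ((1 - 2 * δ) * (1 / 2) * σ) =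
      (1 / 2 + δ) * σ := by
    field_simp; ring
  refine ⟨by nlinarith, fun i j hi hj hij => ?_, fun i hi => ?_⟩
  · rw [hA, hAη]; exact hleaf i j hi hj hij
  · rw [hη, hρ]; exact hcenter i hi

lemma isApproxStarPts_ite {α : Type*} {d : α → α → ℝ} {m : ℕ} {z : α} {y : ℕ → α}
    {δ σ : ℝ} (hδ : δ < 1 / 2) (hσ : 0 < σ)
    (hcenter : ∀ p < m, (1 / 2 - δ) * σ ≤ d z (y p) ∧ d z (y p) ≤ (1 / 2 + δ) * σ)
    (hleaf : ∀ p q, p < m → q < m → p ≠ q →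
      (1 - δ) * σ ≤ d (y q) (y p) ∧ d (y q) (y p) ≤ (1 + δ) * σ) :
    IsApproxStarPts d ((2 + 2 * δ) / (1 - 2 * δ)) ((1 + 2 * δ) / (1 - 2 * δ) - 1)
      ((1 - 2 * δ) * (1 / 2) * σ) m (fun i => if i = 0 then z else y (i - 1)) := by
  have hval {i : Fin (m + 1)} (hi : i ≠ 0) : (i : ℕ) - 1 < m ∧ (i : ℕ) ≠ 0 := by
    have : (i : ℕ) ≠ 0 := fun h => hi (Fin.ext h)
    omega
  refine isApproxStarPts_of_dist_bounds hδ hσ (fun i hi => ?_) fun i j hi hj hij => ?_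
  · simpa only [if_pos, if_neg hi] using hcenter _ (hval hi).1
  · have := Fin.val_ne_of_ne hij
    have hi' := hval hi
    have hj' := hval hj
    simpa only [if_neg hi, if_neg hj] using hleaf _ _ hj'.1 hi'.1 (by omega)

lemma approxStar_constants_bounds {δ : ℝ} (hδ₀ : 0 < δ) (hδ : δ ≤ 1 / 8) :
    2 < (2 + 2 * δ) / (1 - 2 * δ) ∧ 0 < (1 + 2 * δ) / (1 - 2 * δ) - 1 ∧
      (1 + 2 * δ) / (1 - 2 * δ) - 1 ≤ 2 / 3 := by
  have h : 0 < 1 - 2 * δ := by linarith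
  refine ⟨?_, ?_, ?_⟩
  · rw [lt_div_iff₀ h]; linarith
  · rw [sub_pos, one_lt_div h]; linarith
  · rw [sub_le_iff_le_add, div_le_iff₀ h]; linarith

theorem zigzag_approx_gives_star_general (f : ℝ → ℝ)
    (n : ℕ) (hn : 6 ≤ n)
    (s t : ℝ) (hst : s < t)
    (happrox : ∀ u ∈ Icc (0 : ℝ) 1,
      |f (s + (t - s) * u) - f s - Real.sqrt (t - s) * zigzag n u| <
        Real.sqrt (t - s) * (2 : ℝ) ^ (1 - (n : ℤ))) :
    -- (i)
    (∀ p : ℕ, p ≤ n - 2 →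
      (1 / 2 - (2 : ℝ) ^ (3 - (n : ℤ))) * Real.sqrt (t - s) ≤
        treeDist f (s + (t - s) * (1 / (4 * n)))
          (s + (t - s) * ((2 * p + 1) / (2 * n))) ∧
      treeDist f (s + (t - s) * (1 / (4 * n)))
          (s + (t - s) * ((2 * p + 1) / (2 * n))) ≤
        (1 / 2 + (2 : ℝ) ^ (3 - (n : ℤ))) * Real.sqrt (t - s)) ∧
    -- (ii)
    (∀ p q : ℕ, p ≤ n - 2 → q ≤ n - 2 → p ≠ q →
      (1 - (2 : ℝ) ^ (3 - (n : ℤ))) * Real.sqrt (t - s) ≤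
        treeDist f (s + (t - s) * ((2 * q + 1) / (2 * n)))
          (s + (t - s) * ((2 * p + 1) / (2 * n))) ∧
      treeDist f (s + (t - s) * ((2 * q + 1) / (2 * n)))
          (s + (t - s) * ((2 * p + 1) / (2 * n))) ≤
        (1 + (2 : ℝ) ^ (3 - (n : ℤ))) * Real.sqrt (t - s)) ∧
    -- consequently: an approximate (n−1)-star
    (∃ x : Fin ((n - 1) + 1) → ℝ,
      x 0 = s + (t - s) * (1 / (4 * n)) ∧
      (∀ i : Fin ((n - 1) + 1), i ≠ 0 →
        x i = s + (t - s) * ((2 * ((i : ℕ) - 1) + 1) / (2 * n))) ∧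
      IsApproxStarPts (treeDist f)
        ((2 + (2 : ℝ) ^ (4 - (n : ℤ))) / (1 - (2 : ℝ) ^ (4 - (n : ℤ))))
        ((1 + (2 : ℝ) ^ (4 - (n : ℤ))) / (1 - (2 : ℝ) ^ (4 - (n : ℤ))) - 1)
        ((1 - (2 : ℝ) ^ (4 - (n : ℤ))) * (1 / 2) * Real.sqrt (t - s))
        (n - 1) x) ∧
    2 < (2 + (2 : ℝ) ^ (4 - (n : ℤ))) / (1 - (2 : ℝ) ^ (4 - (n : ℤ))) ∧
    0 < (1 + (2 : ℝ) ^ (4 - (n : ℤ))) / (1 - (2 : ℝ) ^ (4 - (n : ℤ))) - 1 ∧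
    (1 + (2 : ℝ) ^ (4 - (n : ℤ))) / (1 - (2 : ℝ) ^ (4 - (n : ℤ))) - 1 ≤ 2 / 3 := by
  have hcenter (p : ℕ) (hp : p ≤ n - 2) :=
    IsZigzagApprox.treeDist_center_odd_bounds happrox hst (p := p) (by omega)
  have hleaf (p q : ℕ) (hp : p ≤ n - 2) (hq : q ≤ n - 2) (hpq : p ≠ q) :=
    IsZigzagApprox.treeDist_odd_odd_bounds happrox hst (by omega) (by omega) hpq
  have hδ : (2 : ℝ) ^ (3 - (n : ℤ)) ≤ 1 / 8 :=
    (zpow_le_zpow_right₀ one_le_two (by omega : 3 - (n : ℤ) ≤ -3)).trans (by norm_num)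
  rw [show (2 : ℝ) ^ (4 - (n : ℤ)) = 2 * 2 ^ (3 - (n : ℤ)) by
    rw [show 4 - (n : ℤ) = 1 + (3 - n) by ring, zpow_add₀ two_ne_zero, zpow_one]]
  refine ⟨hcenter, hleaf, ?_, approxStar_constants_bounds (by positivity) hδ⟩
  refine ⟨_, if_pos rfl, fun i hi => ?_, isApproxStarPts_ite (by linarith)
    (Real.sqrt_pos.mpr (sub_pos.mpr hst)) (fun p hp => hcenter p (by omega))
    fun p q hp hq => hleaf p q (by omega) (by omega)⟩
  rw [if_neg hi, Nat.cast_sub (Nat.one_le_iff_ne_zero.mpr fun h => hi (Fin.ext h)), Nat.cast_one]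

/-- If a continuous excursion function `f` approximates a rescaled zig-zag
`F_n` (`n ≥ 6`) within `√(t−s)·2^{1−n}` on an interval `[s,t] ⊆ [0,1]`, then, writing
`G(u) = s + (t−s)u`, `z = 1/(4n)` and `y_p = (2p+1)/(2n)`:
(i) `(1/2 − 2^{3−n})√(t−s) ≤ d_f(G z, G y_p) ≤ (1/2 + 2^{3−n})√(t−s)`;
(ii) `(1 − 2^{3−n})√(t−s) ≤ d_f(G y_q, G y_p) ≤ (1 + 2^{3−n})√(t−s)` for `q ≠ p`;
and consequently the points `x₀ = G z`, `x_p = G y_{p−1}` (`1 ≤ p ≤ n−1`) form an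
`(Aₙ, ηₙ)`-approximate `(n−1)`-star in `([0,1], d_f)` with
`ρₙ = (1 − 2^{4−n})·(1/2)·√(t−s)`, `Aₙ = (2+2^{4−n})/(1−2^{4−n}) > 2` and
`ηₙ = (1+2^{4−n})/(1−2^{4−n}) − 1 ∈ (0,2/3]`. -/
theorem zigzag_approx_gives_star (f : ℝ → ℝ)
    (hcont : ContinuousOn f (Icc 0 1))
    (hf0 : f 0 = 0) (hf1 : f 1 = 0)
    (hpos : ∀ u ∈ Ioo (0 : ℝ) 1, 0 < f u)
    (hnonneg : ∀ u ∈ Icc (0 : ℝ) 1, 0 ≤ f u)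
    (n : ℕ) (hn : 6 ≤ n)
    (s t : ℝ) (hs : 0 ≤ s) (hst : s < t) (ht : t ≤ 1)
    (happrox : ∀ u ∈ Icc (0 : ℝ) 1,
      |f (s + (t - s) * u) - f s - Real.sqrt (t - s) * zigzag n u| <
        Real.sqrt (t - s) * (2 : ℝ) ^ (1 - (n : ℤ))) :
    -- (i)
    (∀ p : ℕ, p ≤ n - 2 →
      (1 / 2 - (2 : ℝ) ^ (3 - (n : ℤ))) * Real.sqrt (t - s) ≤
        treeDist f (s + (t - s) * (1 / (4 * n)))
          (s + (t - s) * ((2 * p + 1) / (2 * n))) ∧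
      treeDist f (s + (t - s) * (1 / (4 * n)))
          (s + (t - s) * ((2 * p + 1) / (2 * n))) ≤
        (1 / 2 + (2 : ℝ) ^ (3 - (n : ℤ))) * Real.sqrt (t - s)) ∧
    -- (ii)
    (∀ p q : ℕ, p ≤ n - 2 → q ≤ n - 2 → p ≠ q →
      (1 - (2 : ℝ) ^ (3 - (n : ℤ))) * Real.sqrt (t - s) ≤
        treeDist f (s + (t - s) * ((2 * q + 1) / (2 * n)))
          (s + (t - s) * ((2 * p + 1) / (2 * n))) ∧
      treeDist f (s + (t - s) * ((2 * q + 1) / (2 * n)))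
          (s + (t - s) * ((2 * p + 1) / (2 * n))) ≤
        (1 + (2 : ℝ) ^ (3 - (n : ℤ))) * Real.sqrt (t - s)) ∧
    -- consequently: an approximate (n−1)-star
    (∃ x : Fin ((n - 1) + 1) → ℝ,
      x 0 = s + (t - s) * (1 / (4 * n)) ∧
      (∀ i : Fin ((n - 1) + 1), i ≠ 0 →
        x i = s + (t - s) * ((2 * ((i : ℕ) - 1) + 1) / (2 * n))) ∧
      IsApproxStarPts (treeDist f)
        ((2 + (2 : ℝ) ^ (4 - (n : ℤ))) / (1 - (2 : ℝ) ^ (4 - (n : ℤ))))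
        ((1 + (2 : ℝ) ^ (4 - (n : ℤ))) / (1 - (2 : ℝ) ^ (4 - (n : ℤ))) - 1)
        ((1 - (2 : ℝ) ^ (4 - (n : ℤ))) * (1 / 2) * Real.sqrt (t - s))
        (n - 1) x) ∧
    2 < (2 + (2 : ℝ) ^ (4 - (n : ℤ))) / (1 - (2 : ℝ) ^ (4 - (n : ℤ))) ∧
    0 < (1 + (2 : ℝ) ^ (4 - (n : ℤ))) / (1 - (2 : ℝ) ^ (4 - (n : ℤ))) - 1 ∧
    (1 + (2 : ℝ) ^ (4 - (n : ℤ))) / (1 - (2 : ℝ) ^ (4 - (n : ℤ))) - 1 ≤ 2 / 3 :=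
  zigzag_approx_gives_star_general f n hn s t hst happrox
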